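/- Let Q = Q₀ + sQ₁ = (t−h₁)···(t−hₙ)(s−h)(t−k₁)···(t−kₘ) be a factored star-one-polynomial and set Nⱼ = N(t−kⱼ) ∈ ℝ[t]. Then Q₁·conj(Q₀) = −(t−h₁)···(t−hₙ)·conj(h)·conj(t−hₙ)···conj(t−h₁)·N₁···Nₘ. In particular, if z ∈ ℂ satisfies Nⱼ(z) = 0 for some j, then Q₁(z)·conj(Q₀)(z) = 0. -/

import Mathlib

open Polynomial

/-- Coefficientwise quaternion conjugation of a univariate polynomial in ℍ[t]. -/
noncomputable def conj1 (Q : Polynomial (Quaternion ℝ)) : Polynomial (Quaternion ℝ) :=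
  Q.sum fun n a => C (star a) * X ^ n

/-- The natural embedding ℍ → ℂℍ of the real quaternions into the complex quaternions. -/
noncomputable def qc (a : Quaternion ℝ) : Quaternion ℂ :=
  ⟨(a.re : ℂ), (a.imI : ℂ), (a.imJ : ℂ), (a.imK : ℂ)⟩

/-- Evaluation of a quaternionic polynomial at a complex number, with value in ℂℍ. -/
noncomputable def evalC (z : ℂ) (H : Polynomial (Quaternion ℝ)) : Quaternion ℂ :=
  (H.sum fun n a => C (qc a) * X ^ n).eval (algebraMap ℂ (Quaternion ℂ) z)

/-- The real norm polynomial N(t − h) = t² − 2·Re(h)·t + N(h) ∈ ℝ[t]. -/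
noncomputable def Nre (h : Quaternion ℝ) : Polynomial ℝ :=
  X ^ 2 - C (2 * h.re) * X + C (Quaternion.normSq h)

/-! ### Auxiliary lemmas -/

lemma conj1_coeff (P : Polynomial (Quaternion ℝ)) (k : ℕ) :
    (conj1 P).coeff k = star (P.coeff k) := by
  rw [conj1, Polynomial.sum]
  simp only [finset_sum_coeff, C_mul_X_pow_eq_monomial, coeff_monomial]
  rw [Finset.sum_ite_eq' P.support k fun n => star (P.coeff n)]
  by_cases hk : k ∈ P.support
  · simp [hk]
  · simp [hk, Polynomial.notMem_support_iff.mp hk]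

lemma conj1_mul (P Q : Polynomial (Quaternion ℝ)) :
    conj1 (P * Q) = conj1 Q * conj1 P := by
  refine Polynomial.ext fun k => ?_
  simp only [conj1_coeff, coeff_mul, star_sum, star_mul]
  conv_rhs => rw [← Finset.HasAntidiagonal.map_swap_antidiagonal, Finset.sum_map]
  simp

lemma conj1_neg (P : Polynomial (Quaternion ℝ)) : conj1 (-P) = -conj1 P := by
  refine Polynomial.ext fun k => ?_; simp [conj1_coeff]

lemma conj1_C (a : Quaternion ℝ) : conj1 (C a) = C (star a) := by
  refine Polynomial.ext fun k => ?_; simp [conj1_coeff, coeff_C, apply_ite star]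

lemma conj1_one : conj1 1 = 1 := by
  simpa using conj1_C 1

lemma conj1_lin (a : Quaternion ℝ) : conj1 (X - C a) = X - C (star a) := by
  refine Polynomial.ext fun k => ?_
  simp [conj1_coeff, coeff_X, coeff_C, apply_ite star, sub_eq_add_neg, apply_ite Neg.neg]

lemma conj1_prod (l : List (Quaternion ℝ)) :
    conj1 ((l.map fun a => X - C a).prod) =
      ((l.map fun a => X - C (star a)).reverse).prod := by
  induction l with
  | nil => simpa using conj1_one
  | cons a l ih =>
      simp only [List.map_cons, List.prod_cons, List.reverse_cons, List.prod_append,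
        List.prod_cons, List.prod_nil, mul_one, conj1_mul, conj1_lin, ih]

@[simp] lemma qc_re (a : Quaternion ℝ) : (qc a).re = (a.re : ℂ) := rfl
@[simp] lemma qc_imI (a : Quaternion ℝ) : (qc a).imI = (a.imI : ℂ) := rfl
@[simp] lemma qc_imJ (a : Quaternion ℝ) : (qc a).imJ = (a.imJ : ℂ) := rfl
@[simp] lemma qc_imK (a : Quaternion ℝ) : (qc a).imK = (a.imK : ℂ) := rfl

/-- `qc` as a ring homomorphism. -/
noncomputable def qcHom : Quaternion ℝ →+* Quaternion ℂ where
  toFun := qc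
  map_one' := by ext <;> simp <;> rfl
  map_mul' a b := by
    ext <;> simp [Quaternion.re_mul, Quaternion.imI_mul, Quaternion.imJ_mul,
      Quaternion.imK_mul]
  map_zero' := by ext <;> simp <;> rfl
  map_add' a b := by ext <;> simp

@[simp] lemma qcHom_apply (a : Quaternion ℝ) : qcHom a = qc a := rfl

lemma C_alg_comm (r : ℝ) (q : Polynomial (Quaternion ℝ)) :
    C (algebraMap ℝ (Quaternion ℝ) r) * q = q * C (algebraMap ℝ (Quaternion ℝ) r) := by
  refine Polynomial.ext fun k => ?_
  simp [coeff_C_mul, coeff_mul_C, Algebra.commutes, Quaternion.coe_commutes]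

lemma map_alg_comm (p : Polynomial ℝ) (q : Polynomial (Quaternion ℝ)) :
    p.map (algebraMap ℝ (Quaternion ℝ)) * q = q * p.map (algebraMap ℝ (Quaternion ℝ)) := by
  induction p using Polynomial.induction_on' with
  | add f g hf hg => simp [add_mul, mul_add, hf, hg]
  | monomial n r =>
      rw [map_monomial, ← C_mul_X_pow_eq_monomial, mul_assoc, X_pow_mul, ← mul_assoc,
        C_alg_comm, mul_assoc]

lemma lin_mul_lin_star (k : Quaternion ℝ) :
    (X - C k) * (X - C (star k)) = (Nre k).map (algebraMap ℝ (Quaternion ℝ)) := by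
  have e1 : (X - C k) * (X - C (star k)) =
      X ^ 2 - C (star k + k) * X + C (k * star k) := by
    rw [sub_mul, mul_sub, mul_sub, X_mul (p := C (star k)), C_add, add_mul, ← C_mul, sq]
    abel
  rw [e1, Quaternion.star_add_self', Quaternion.self_mul_star, Nre]
  simp only [Polynomial.map_add, Polynomial.map_sub, Polynomial.map_mul, Polynomial.map_pow,
    map_C, map_X, Quaternion.algebraMap_def]

lemma K_mul_conj1_K (ks : List (Quaternion ℝ)) :
    (ks.map fun a => X - C a).prod * conj1 ((ks.map fun a => X - C a).prod)
      = ((ks.map Nre).prod).map (algebraMap ℝ (Quaternion ℝ)) := by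
  induction ks with
  | nil => simp [conj1_one]
  | cons k ks ih =>
      simp only [List.map_cons, List.prod_cons, conj1_mul, conj1_lin]
      calc (X - C k) * (ks.map fun a => X - C a).prod *
            (conj1 (ks.map fun a => X - C a).prod * (X - C (star k)))
          = (X - C k) * ((ks.map fun a => X - C a).prod *
            conj1 (ks.map fun a => X - C a).prod) * (X - C (star k)) := by
            rw [mul_assoc, mul_assoc, mul_assoc]
        _ = (X - C k) * ((ks.map Nre).prod).map (algebraMap ℝ (Quaternion ℝ)) *
            (X - C (star k)) := by rw [ih]
        _ = ((ks.map Nre).prod).map (algebraMap ℝ (Quaternion ℝ)) *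
            ((X - C k) * (X - C (star k))) := by
            rw [← map_alg_comm, mul_assoc]
        _ = _ := by
            rw [lin_mul_lin_star, ← Polynomial.map_mul, mul_comm]

lemma evalC_eq (z : ℂ) (P : Polynomial (Quaternion ℝ)) :
    evalC z P = eval₂ qcHom (algebraMap ℂ (Quaternion ℂ) z) P := by
  rw [evalC, eval₂_eq_sum, Polynomial.sum, Polynomial.sum, eval_finset_sum]
  simp [C_mul_X_pow_eq_monomial, eval_monomial]

lemma qcHom_comp_alg :
    qcHom.comp (algebraMap ℝ (Quaternion ℝ)) =
      (algebraMap ℂ (Quaternion ℂ)).comp (algebraMap ℝ ℂ) := by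
  refine RingHom.ext fun r => ?_
  ext <;> simp [Quaternion.algebraMap_def]

set_option maxHeartbeats 1000000
set_option synthInstance.maxHeartbeats 400000

/-- For Q = Q₀ + sQ₁ = (t−h₁)···(t−hₙ)(s−h)(t−k₁)···(t−kₘ) with
Nⱼ = N(t−kⱼ), one has
Q₁·conj(Q₀) = −(t−h₁)···(t−hₙ)·conj(h)·conj(t−hₙ)···conj(t−h₁)·N₁···Nₘ;
in particular, if Nⱼ(z) = 0 for some j and z ∈ ℂ, then Q₁(z)·conj(Q₀)(z) = 0. -/
theorem Q1_mul_conj_Q0 (Q₀ Q₁ : Polynomial (Quaternion ℝ))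
    (h : Quaternion ℝ) (hs ks : List (Quaternion ℝ))
    (hfac : C Q₀ + X * C Q₁ =
      (hs.map fun a => C (X - C a)).prod * (X - C (C h)) *
      (ks.map fun a => C (X - C a)).prod) :
    Q₁ * conj1 Q₀ =
      -((hs.map fun a => X - C a).prod * C (star h) *
        ((hs.map fun a => X - C (star a)).reverse).prod *
        ((ks.map Nre).prod).map (algebraMap ℝ (Quaternion ℝ))) ∧
    ∀ z : ℂ, (∃ k ∈ ks, Polynomial.aeval z (Nre k) = 0) →
      evalC z Q₁ * evalC z (conj1 Q₀) = 0 := by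
  set H : Polynomial (Quaternion ℝ) := (hs.map fun a => X - C a).prod with hH
  set K : Polynomial (Quaternion ℝ) := (ks.map fun a => X - C a).prod with hK
  set M : Polynomial (Quaternion ℝ) := ((ks.map Nre).prod).map (algebraMap ℝ (Quaternion ℝ))
    with hM
  have hCp : ∀ l : List (Quaternion ℝ), (l.map fun a => C (X - C a)).prod
      = C ((l.map fun a => X - C a).prod) := by
    intro l
    rw [show (l.map fun a => C (X - C a)) = (l.map fun a => X - C a).map C by
      simp [List.map_map, Function.comp]]
    exact (map_list_prod (C : Polynomial (Quaternion ℝ) →+* _) _).symm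
  rw [hCp, hCp] at hfac
  have hRHS : C H * (X - C (C h)) * C K
      = C (-(H * C h * K)) + X * C (H * K) := by
    rw [mul_sub, sub_mul, ← X_mul, mul_assoc, ← C_mul, ← C_mul, ← C_mul, C_neg]
    abel
  rw [hRHS] at hfac
  have hQ0 : Q₀ = -(H * C h * K) := by
    have := congrArg (fun p => p.coeff 0) hfac
    simpa [mul_coeff_zero, coeff_X_zero] using this
  have hQ1 : Q₁ = H * K := by
    have := congrArg (fun p => p.coeff 1) hfac
    simpa [coeff_C, coeff_X_mul] using this
  have hconjQ0 : conj1 Q₀ = -(conj1 K * (C (star h) * conj1 H)) := by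
    rw [hQ0, conj1_neg, conj1_mul, conj1_mul, conj1_C]
  have key : Q₁ * conj1 Q₀ = -(H * (C (star h) * (conj1 H * M))) := by
    calc Q₁ * conj1 Q₀
        = -(H * (K * (conj1 K * (C (star h) * conj1 H)))) := by
          rw [hQ1, hconjQ0, mul_neg, mul_assoc]
      _ = -(H * ((K * conj1 K) * (C (star h) * conj1 H))) := by rw [mul_assoc]
      _ = -(H * (M * (C (star h) * conj1 H))) := by rw [hK, K_mul_conj1_K, ← hM]
      _ = -(H * ((C (star h) * conj1 H) * M)) := by rw [map_alg_comm]
      _ = _ := by rw [mul_assoc]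
  constructor
  · rw [key, ← conj1_prod, hH]
    simp only [mul_assoc]
  · intro z ⟨k, hk, hkz⟩
    have hcomm : ∀ a : Quaternion ℝ,
        Commute (qcHom a) (algebraMap ℂ (Quaternion ℂ) z) :=
      fun a => (Algebra.commutes z (qcHom a)).symm
    set E : Polynomial (Quaternion ℝ) →+* Quaternion ℂ :=
      eval₂RingHom' qcHom (algebraMap ℂ (Quaternion ℂ) z) hcomm with hE
    have hEeval : ∀ P, evalC z P = E P := fun P => evalC_eq z P
    have hEM : E M = 0 := by
      have h0 : ∀ P, E P = eval₂ qcHom (algebraMap ℂ (Quaternion ℂ) z) P := fun P => rfl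
      have h1 : E M = eval₂ (qcHom.comp (algebraMap ℝ (Quaternion ℝ)))
          (algebraMap ℂ (Quaternion ℂ) z) ((ks.map Nre).prod) := by
        rw [h0, hM, eval₂_map]
      rw [h1, qcHom_comp_alg,
        ← Polynomial.hom_eval₂ _ (algebraMap ℝ ℂ) (algebraMap ℂ (Quaternion ℂ)) z,
        ← aeval_def]
      have : (Polynomial.aeval z) ((ks.map Nre).prod) = 0 := by
        rw [map_list_prod]
        refine List.prod_eq_zero ?_
        simp only [List.map_map]
        exact List.mem_map.mpr ⟨k, hk, hkz⟩
      rw [this, map_zero]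
    rw [hEeval, hEeval, ← RingHom.map_mul, key, RingHom.map_neg, RingHom.map_mul,
      RingHom.map_mul, RingHom.map_mul, hEM, mul_zero, mul_zero, mul_zero, neg_zero]
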